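/- A map f : ℤ → D is an increasing bijection from (ℤ, <) to (D, ≺) with f(0) = the single-letter word 0, if and only if f = rep_Fc, the Fibonacci's complement representation map (the inverse of val_Fc). -/

import Mathlib

/-- Fibonacci sequence with F 0 = 1, F 1 = 2. -/
def F (n : ℕ) : ℕ := Nat.fib (n + 2)

/-- Fibonacci extended to integer indices ≥ -2, with F_{-2} = 0, F_{-1} = 1. -/
def Fz (m : ℤ) : ℤ := ((m + 2).toNat.fib : ℤ)

/-- Fibonacci value of a word (most significant digit first):
`valF (w_{k-1} ⋯ w_0) = ∑ w_i F_i`. -/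
def valF : List ℕ → ℕ
  | [] => 0
  | a :: t => a * F t.length + valF t

/-- Fibonacci's complement value:
`valFc (w_{k-1} ⋯ w_0) = ∑ w_i F_i − w_{k-1} F_k`. -/
def valFc (w : List ℕ) : ℤ :=
  (valF w : ℤ) - (w.headD 0 : ℤ) * (F w.length : ℤ)

/-- The domain D of the Fibonacci's complement numeration system. -/
def inD (w : List ℕ) : Prop :=
  (∀ x ∈ w, x ≤ 1) ∧ Odd w.length ∧ ¬ [1, 1] <:+: w ∧
    ¬ [0, 0, 0] <+: w ∧ ¬ [1, 0, 1] <+: w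

/-- Radix order: shorter words first, ties broken lexicographically. -/
def radLt (u v : List ℕ) : Prop :=
  u.length < v.length ∨ (u.length = v.length ∧ List.Lex (· < ·) u v)

/-- Reverse-radix order: longer words first, ties broken lexicographically. -/
def revLt (u v : List ℕ) : Prop :=
  v.length < u.length ∨ (u.length = v.length ∧ List.Lex (· < ·) u v)

/-- The total order ≺. -/
def precLt (u v : List ℕ) : Prop :=
  (u.headD 0 = 1 ∧ v.headD 0 = 0) ∨
  (u.headD 0 = 0 ∧ v.headD 0 = 0 ∧ radLt u v) ∨
  (u.headD 0 = 1 ∧ v.headD 0 = 1 ∧ revLt u v)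

/-!
On `D` the value `valFc` is strictly increasing for `≺`. A word `0t` has value `valF t ≥ 0`; as
`t` has even length and does not start with `00`, the lengths `0, 2, 4, …` of `t` give the
consecutive blocks `[0, F 0), [F 0, F 2), [F 2, F 4), …`, and inside a block the value grows
lexicographically. The word `1` has value `-1`, and a word `100s` has value
`valF s - F (|s| + 1) ≤ -2`, with longer `s` giving smaller values. As `≺` is total on `D`,
`valFc` is injective on `D` and reflects `≺`, and the greedy (Zeckendorf) expansion shows that it
is onto `ℤ`. So for an increasing bijection `f` with `f 0 = [0]`, `valFc ∘ f` is an order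
automorphism of `ℤ` fixing `0`, hence the identity.
-/

lemma Int.apply_eq_apply_zero_add_of_strictMono_of_surjective {φ : ℤ → ℤ} (hφ : StrictMono φ)
    (hφ' : Function.Surjective φ) (n : ℤ) : φ n = φ 0 + n := by
  have hsucc (m : ℤ) : φ (m + 1) = φ m + 1 := by
    simpa only [Order.succ_eq_add_one, StrictMono.coe_orderIsoOfSurjective] using
      (hφ.orderIsoOfSurjective φ hφ').map_succ m
  induction n using Int.induction_on with
  | zero => simp
  | succ k ih => rw [hsucc, ih, add_assoc]
  | pred k ih =>
    have := hsucc (-(k : ℤ) - 1)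
    rw [sub_add_cancel] at this
    omega

lemma F_zero : F 0 = 1 := rfl

lemma F_one : F 1 = 2 := rfl

lemma F_add_two (n : ℕ) : F (n + 2) = F (n + 1) + F n := Nat.fib_add_two.trans (add_comm _ _)

lemma F_strictMono : StrictMono F := Nat.fib_add_two_strictMono

lemma F_pos (n : ℕ) : 0 < F n := Nat.fib_pos.2 (by omega)

def IsZeckWord (w : List ℕ) : Prop := (∀ x ∈ w, x ≤ 1) ∧ ¬ [1, 1] <:+: w

@[simp] lemma isZeckWord_nil : IsZeckWord [] := by simp [IsZeckWord]

@[simp] lemma isZeckWord_cons {a : ℕ} {t : List ℕ} :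
    IsZeckWord (a :: t) ↔ a ≤ 1 ∧ (a = 1 → t.head? ≠ some 1) ∧ IsZeckWord t := by
  cases t with
  | nil => simp [IsZeckWord, List.infix_cons_iff]
  | cons b t =>
    simp only [IsZeckWord, List.mem_cons, forall_eq_or_imp, List.infix_cons_iff,
      List.cons_prefix_cons, List.nil_prefix, and_true, not_or, not_and, List.head?_cons, ne_eq,
      Option.some.injEq]
    tauto

lemma IsZeckWord.valF_lt : ∀ {w : List ℕ}, IsZeckWord w → valF w < F w.length
  | [], _ => F_pos 0
  | 0 :: t, h => by
    have := (isZeckWord_cons.1 h).2.2.valF_lt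
    have := F_strictMono (by omega : t.length < t.length + 1)
    simp only [valF, List.length_cons]
    omega
  | [1], _ => by decide
  | 1 :: 0 :: s, h => by
    have := (isZeckWord_cons.1 (isZeckWord_cons.1 h).2.2).2.2.valF_lt
    have := F_add_two s.length
    simp only [valF, List.length_cons, Nat.add_assoc, Nat.reduceAdd]
    omega
  | 1 :: 1 :: _, h => by simp at h
  | 1 :: (_ + 2) :: _, h => by simp at h
  | (_ + 2) :: _, h => by simp at h

lemma valF_lt_valF_of_lex {u v : List ℕ} (hu : IsZeckWord u) (hlen : u.length = v.length)
    (hlex : List.Lex (· < ·) u v) : valF u < valF v := by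
  induction hlex with
  | nil => simp at hlen
  | @rel a u b v hab =>
    have := (isZeckWord_cons.1 hu).2.2.valF_lt
    have : (a + 1) * F u.length ≤ b * F v.length := by
      rw [show u.length = v.length by simpa using hlen]
      exact Nat.mul_le_mul_right _ hab
    simp only [valF]
    nlinarith
  | cons _ ih =>
    simp only [valF, List.length_cons, Nat.add_right_cancel_iff] at hlen ⊢
    have := ih (isZeckWord_cons.1 hu).2.2 hlen
    rw [hlen]
    omega

lemma F_le_valF_of_not_prefix :
    ∀ {t : List ℕ}, ¬ [0, 0] <+: t → 2 ≤ t.length → F (t.length - 2) ≤ valF t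
  | a :: b :: r, ht, _ => by
    simp only [List.cons_prefix_cons, List.nil_prefix, and_true, not_and_or] at ht
    simp only [valF, List.length_cons, Nat.add_assoc, Nat.reduceAdd, Nat.add_sub_cancel]
    have := F_strictMono.monotone (by omega : r.length ≤ r.length + 1)
    rcases ht with ha | hb
    · nlinarith [(by omega : 1 ≤ a)]
    · nlinarith [(by omega : 1 ≤ b)]

lemma inD_iff_isZeckWord {w : List ℕ} :
    inD w ↔ IsZeckWord w ∧ Odd w.length ∧ ¬ [0, 0, 0] <+: w ∧ ¬ [1, 0, 1] <+: w := by
  simp only [inD, IsZeckWord]; tauto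

lemma inD_iff {w : List ℕ} : inD w ↔
    (∃ t, w = 0 :: t ∧ IsZeckWord t ∧ Even t.length ∧ ¬ [0, 0] <+: t) ∨ w = [1] ∨
      ∃ s, w = 1 :: 0 :: 0 :: s ∧ IsZeckWord s ∧ Even s.length := by
  rw [inD_iff_isZeckWord]
  match w with
  | [] => simp
  | 0 :: t => simp [List.cons_prefix_cons, Nat.odd_add_one]
  | [1] => simp
  | [1, 0] => simp
  | 1 :: 0 :: 0 :: s => simp [List.cons_prefix_cons, Nat.odd_add_one]
  | 1 :: 0 :: 1 :: s => simp [List.cons_prefix_cons]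
  | 1 :: 0 :: (_ + 2) :: s => simp
  | 1 :: 1 :: s => simp
  | 1 :: (_ + 2) :: s => simp
  | (_ + 2) :: s => simp

@[simp] lemma valFc_zero_cons (t : List ℕ) : valFc (0 :: t) = valF t := by
  simp [valFc, valF]

@[simp] lemma valFc_one : valFc [1] = -1 := by decide

@[simp] lemma valFc_one_zero_zero_cons (s : List ℕ) :
    valFc (1 :: 0 :: 0 :: s) = valF s - F (s.length + 1) := by
  have := F_add_two (s.length + 1)
  simp only [valFc, valF, List.length_cons, List.headD, Nat.add_assoc, Nat.reduceAdd] at this ⊢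
  push_cast
  omega

lemma IsZeckWord.valF_sub_F_length_succ_le {s : List ℕ} (hs : IsZeckWord s) :
    (valF s : ℤ) - F (s.length + 1) ≤ -2 := by
  have := hs.valF_lt
  have := F_strictMono (by omega : s.length < s.length + 1)
  omega

lemma valF_lt_valF_of_radLt {t t' : List ℕ} (ht : IsZeckWord t) (hte : Even t.length)
    (hte' : Even t'.length) (ht0' : ¬ [0, 0] <+: t') (h : radLt t t') : valF t < valF t' := by
  rcases h with hlen | ⟨hlen, hlex⟩
  · have hlen2 : t.length + 2 ≤ t'.length := by
      obtain ⟨a, ha⟩ := hte; obtain ⟨b, hb⟩ := hte'; omega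
    calc valF t < F t.length := ht.valF_lt
      _ ≤ F (t'.length - 2) := F_strictMono.monotone (by omega)
      _ ≤ valF t' := F_le_valF_of_not_prefix ht0' (by omega)
  · exact valF_lt_valF_of_lex ht hlen hlex

lemma valF_sub_F_lt_of_revLt {s s' : List ℕ} (hs : IsZeckWord s) (hse : Even s.length)
    (hse' : Even s'.length) (h : revLt s s') :
    (valF s : ℤ) - F (s.length + 1) < valF s' - F (s'.length + 1) := by
  rcases h with hlen | ⟨hlen, hlex⟩
  · obtain ⟨k, hk⟩ : ∃ k, s.length = k + 1 := ⟨s.length - 1, by omega⟩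
    have hlen2 : s'.length + 1 ≤ k := by
      obtain ⟨a, ha⟩ := hse; obtain ⟨b, hb⟩ := hse'; omega
    have := hs.valF_lt
    have : F (s.length + 1) = F s.length + F k := by rw [hk]; exact F_add_two k
    have := F_strictMono.monotone hlen2
    omega
  · have := valF_lt_valF_of_lex hs hlen hlex
    rw [hlen]
    omega

@[simp] lemma radLt_cons_cons {a : ℕ} {u v : List ℕ} : radLt (a :: u) (a :: v) ↔ radLt u v := by
  simp [radLt, List.lex_cons_iff]

@[simp] lemma revLt_cons_cons {a : ℕ} {u v : List ℕ} : revLt (a :: u) (a :: v) ↔ revLt u v := by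
  simp [revLt, List.lex_cons_iff]

lemma valFc_lt_of_precLt {u v : List ℕ} (hu : inD u) (hv : inD v) (h : precLt u v) :
    valFc u < valFc v := by
  rcases inD_iff.1 hu with ⟨t, rfl, ht, hte, -⟩ | rfl | ⟨s, rfl, hs, hse⟩ <;>
    rcases inD_iff.1 hv with ⟨t', rfl, -, hte', ht0'⟩ | rfl | ⟨s', rfl, hs', hse'⟩ <;>
    simp only [precLt, List.headD_cons, radLt_cons_cons, revLt_cons_cons, zero_ne_one, one_ne_zero,
      true_and, false_and, and_false, false_or, or_false, valFc_zero_cons, valFc_one,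
      valFc_one_zero_zero_cons, Nat.cast_lt] at h ⊢
  · exact valF_lt_valF_of_radLt ht hte hte' ht0' h
  · omega
  · simp [revLt] at h
  · simp [revLt] at h
  · have := hs.valF_sub_F_length_succ_le
    omega
  · linarith [hs.valF_sub_F_length_succ_le]
  · exact valF_sub_F_lt_of_revLt hs hse hse' h

lemma radLt_trichotomous (u v : List ℕ) : radLt u v ∨ u = v ∨ radLt v u := by
  rcases lt_trichotomy u.length v.length with h | h | h
  · exact Or.inl (Or.inl h)
  · rcases trichotomous_of (List.Lex (· < ·)) u v with h' | h' | h'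
    · exact Or.inl (Or.inr ⟨h, h'⟩)
    · exact Or.inr (Or.inl h')
    · exact Or.inr (Or.inr (Or.inr ⟨h.symm, h'⟩))
  · exact Or.inr (Or.inr (Or.inl h))

lemma revLt_trichotomous (u v : List ℕ) : revLt u v ∨ u = v ∨ revLt v u := by
  rcases lt_trichotomy u.length v.length with h | h | h
  · exact Or.inr (Or.inr (Or.inl h))
  · rcases trichotomous_of (List.Lex (· < ·)) u v with h' | h' | h'
    · exact Or.inl (Or.inr ⟨h, h'⟩)
    · exact Or.inr (Or.inl h')
    · exact Or.inr (Or.inr (Or.inr ⟨h.symm, h'⟩))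
  · exact Or.inl (Or.inl h)

lemma headD_eq_zero_or_one_of_inD {w : List ℕ} (hw : inD w) : w.headD 0 = 0 ∨ w.headD 0 = 1 := by
  rcases inD_iff.1 hw with ⟨t, rfl, -⟩ | rfl | ⟨s, rfl, -⟩ <;> simp

lemma precLt_trichotomous {u v : List ℕ} (hu : inD u) (hv : inD v) :
    precLt u v ∨ u = v ∨ precLt v u := by
  rcases headD_eq_zero_or_one_of_inD hu with hu' | hu' <;>
    rcases headD_eq_zero_or_one_of_inD hv with hv' | hv'
  · rcases radLt_trichotomous u v with h | h | h <;> simp only [precLt, hu', hv'] <;> tauto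
  · simp only [precLt, hu', hv']; tauto
  · simp only [precLt, hu', hv']; tauto
  · rcases revLt_trichotomous u v with h | h | h <;> simp only [precLt, hu', hv'] <;> tauto

lemma valFc_injOn : Set.InjOn valFc {w | inD w} := by
  intro u hu v hv h
  rcases precLt_trichotomous hu hv with h' | h' | h'
  · exact absurd h (valFc_lt_of_precLt hu hv h').ne
  · exact h'
  · exact absurd h (valFc_lt_of_precLt hv hu h').ne'

lemma valFc_lt_valFc_iff {u v : List ℕ} (hu : inD u) (hv : inD v) :
    valFc u < valFc v ↔ precLt u v := by
  refine ⟨fun h => ?_, valFc_lt_of_precLt hu hv⟩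
  rcases precLt_trichotomous hu hv with h' | rfl | h'
  · exact h'
  · exact absurd h (lt_irrefl _)
  · exact absurd h (valFc_lt_of_precLt hv hu h').not_gt

def zeck : ℕ → ℕ → List ℕ
  | 0, _ => []
  | m + 1, n => if n < F m then 0 :: zeck m n else 1 :: zeck m (n - F m)

@[simp] lemma length_zeck (m n : ℕ) : (zeck m n).length = m := by
  induction m generalizing n with
  | zero => rfl
  | succ m ih => unfold zeck; split <;> simp [ih]

lemma zeck_succ_of_lt {m n : ℕ} (h : n < F m) : zeck (m + 1) n = 0 :: zeck m n := by
  simp [zeck, h]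

lemma zeck_succ_of_le {m n : ℕ} (h : F m ≤ n) : zeck (m + 1) n = 1 :: zeck m (n - F m) := by
  simp [zeck, Nat.not_lt.2 h]

lemma isZeckWord_zeck_and_valF_zeck {m n : ℕ} (h : n < F m) :
    IsZeckWord (zeck m n) ∧ valF (zeck m n) = n := by
  induction m generalizing n with
  | zero =>
    obtain rfl : n = 0 := by simpa [F] using h
    simp [zeck, valF]
  | succ m ih =>
    rcases Nat.lt_or_ge n (F m) with hn | hn
    · obtain ⟨hz, hv⟩ := ih hn
      simp [zeck_succ_of_lt hn, hz, hv, valF]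
    · obtain ⟨hlt, hhead⟩ : n - F m < F m ∧ (zeck m (n - F m)).head? ≠ some 1 := by
        cases m with
        | zero =>
          rw [zero_add, F_one] at h
          rw [F_zero] at hn ⊢
          exact ⟨by omega, by simp [zeck]⟩
        | succ k =>
          have hk : n - F (k + 1) < F k := by
            have := F_add_two k
            change n < F (k + 2) at h
            omega
          exact ⟨hk.trans (F_strictMono k.lt_succ_self), by simp [zeck_succ_of_lt hk]⟩
      obtain ⟨hz, hv⟩ := ih hlt
      refine zeck_succ_of_le hn ▸ ⟨isZeckWord_cons.2 ⟨le_rfl, fun _ => hhead, hz⟩, ?_⟩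
      simp only [valF, length_zeck, one_mul, hv]
      omega

lemma not_prefix_zeck {m n : ℕ} (h : F m ≤ n) : ¬ [0, 0] <+: zeck (m + 2) n := by
  unfold zeck; split_ifs with h'
  · simp [zeck_succ_of_le h]
  · simp

lemma exists_inD_valFc_eq_natCast (n : ℕ) : ∃ w, inD w ∧ valFc w = n := by
  have hex : ∃ j, n < F (2 * j) :=
    ⟨n + 1, by have := F_strictMono.le_apply (x := 2 * (n + 1)); omega⟩
  obtain ⟨j, hj, hmin⟩ : ∃ j, n < F (2 * j) ∧ ∀ i < j, F (2 * i) ≤ n :=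
    ⟨Nat.find hex, Nat.find_spec hex, fun i hi => Nat.not_lt.1 (Nat.find_min hex hi)⟩
  obtain ⟨ht, hval⟩ := isZeckWord_zeck_and_valF_zeck hj
  have hpre : ¬ [0, 0] <+: zeck (2 * j) n := by
    rcases j with _ | i
    · simp [zeck]
    · exact not_prefix_zeck (hmin i i.lt_succ_self)
  exact ⟨0 :: zeck (2 * j) n, inD_iff.2 (Or.inl ⟨_, rfl, ht, by simp, hpre⟩), by simp [hval]⟩

lemma exists_inD_valFc_eq_neg {k : ℕ} (hk : 2 ≤ k) : ∃ w, inD w ∧ valFc w = -k := by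
  have hex : ∃ j, k ≤ F (2 * j + 1) :=
    ⟨k, by have := F_strictMono.le_apply (x := 2 * k + 1); omega⟩
  obtain ⟨j, hj, hmin⟩ : ∃ j, k ≤ F (2 * j + 1) ∧ ∀ i < j, F (2 * i + 1) < k :=
    ⟨Nat.find hex, Nat.find_spec hex, fun i hi => Nat.not_le.1 (Nat.find_min hex hi)⟩
  have hlt : F (2 * j + 1) - k < F (2 * j) := by
    rcases j with _ | i
    · rw [mul_zero, zero_add, F_one, F_zero]
      omega
    · have := hmin i i.lt_succ_self
      have := F_add_two (2 * i + 1)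
      rw [show 2 * (i + 1) + 1 = 2 * i + 1 + 2 by ring,
        show 2 * (i + 1) = 2 * i + 1 + 1 by ring] at *
      omega
  -- `valFc (1 :: 0 :: 0 :: s) = valF s - F (|s| + 1)`, so `s` must have value `F (2 * j + 1) - k`.
  obtain ⟨hs, hval⟩ := isZeckWord_zeck_and_valF_zeck hlt
  refine ⟨1 :: 0 :: 0 :: zeck (2 * j) (F (2 * j + 1) - k),
    inD_iff.2 (Or.inr (Or.inr ⟨_, rfl, hs, by simp⟩)), ?_⟩
  simp only [valFc_one_zero_zero_cons, hval, length_zeck]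
  omega

lemma exists_inD_valFc_eq (n : ℤ) : ∃ w, inD w ∧ valFc w = n := by
  obtain ⟨k, rfl | rfl⟩ := Int.eq_nat_or_neg n
  · exact exists_inD_valFc_eq_natCast k
  · rcases lt_or_ge k 2 with hk | hk
    · interval_cases k
      · exact exists_inD_valFc_eq_natCast 0
      · exact ⟨[1], inD_iff.2 (Or.inr (Or.inl rfl)), by simp⟩
    · exact exists_inD_valFc_eq_neg hk

theorem repFc_characterization (f : ℤ → List ℕ) :
    (Set.BijOn f Set.univ {w : List ℕ | inD w} ∧
      (∀ m n : ℤ, m < n → precLt (f m) (f n)) ∧ f 0 = [0]) ↔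
    (∀ n : ℤ, inD (f n) ∧ valFc (f n) = n) := by
  constructor
  · rintro ⟨hbij, hmono, h0⟩ n
    have hf (n : ℤ) : inD (f n) := hbij.mapsTo (Set.mem_univ n)
    have hφ : StrictMono (valFc ∘ f) := fun m n h => valFc_lt_of_precLt (hf m) (hf n) (hmono m n h)
    have hφ' : Function.Surjective (valFc ∘ f) := fun n => by
      obtain ⟨w, hw, rfl⟩ := exists_inD_valFc_eq n
      obtain ⟨m, -, rfl⟩ := hbij.surjOn hw
      exact ⟨m, rfl⟩
    refine ⟨hf n, ?_⟩
    simpa [h0, valF] using Int.apply_eq_apply_zero_add_of_strictMono_of_surjective hφ hφ' n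
  · intro hf
    refine ⟨⟨fun n _ => (hf n).1, fun m _ n _ h => ?_, fun w hw => ?_⟩, fun m n h => ?_, ?_⟩
    · rw [← (hf m).2, ← (hf n).2, h]
    · exact ⟨valFc w, trivial, valFc_injOn (hf _).1 hw (hf _).2⟩
    · rwa [← valFc_lt_valFc_iff (hf m).1 (hf n).1, (hf m).2, (hf n).2]
    · have hD0 : inD [0] := inD_iff.2 (Or.inl ⟨[], rfl, by simp⟩)
      exact valFc_injOn (hf 0).1 hD0 ((hf 0).2.trans (by simp [valF]))
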